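/- arXiv:2408.04792 — 6 statements merged into one kernel-verified Lean document; each statement's English description precedes it below -/
import Mathlib

section
/- For every continuous t-norm · on [0,1] and all a, b ∈ [0,1]: if a ≤ bⁿ for every natural number n (where bⁿ denotes the n-fold ·-power of b, with b⁰ = 1), then a · b = a. -/
/-- The fact `(0 : ℝ) ≤ 1`, enabling the complete lattice structure on `unitInterval`. -/
instance : Fact ((0:ℝ) ≤ 1) := ⟨zero_le_one⟩

/-- A continuous t-norm: a commutative, associative, monotone binary operation on the
real unit interval `[0,1]` with unit `1`, continuous w.r.t. the usual topology. -/
structure ContinuousTNorm where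
  mul : unitInterval → unitInterval → unitInterval
  mul_comm : ∀ x y, mul x y = mul y x
  mul_assoc : ∀ x y z, mul (mul x y) z = mul x (mul y z)
  mul_mono : ∀ x y z, y ≤ z → mul x y ≤ mul x z
  mul_one : ∀ x, mul x 1 = x
  continuous : Continuous fun p : unitInterval × unitInterval => mul p.1 p.2

/-- `B.pow b n` is the `n`-fold `·`-power of `b`, with `b⁰ = 1`. -/
def ContinuousTNorm.pow (B : ContinuousTNorm) (b : unitInterval) : ℕ → unitInterval
  | 0 => 1
  | n + 1 => B.mul b (B.pow b n)

lemma ContinuousTNorm.one_mul (B : ContinuousTNorm) (x : unitInterval) : B.mul 1 x = x := by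
  rw [B.mul_comm, B.mul_one]

lemma ContinuousTNorm.mul_mono_left (B : ContinuousTNorm) (x y z : unitInterval) (h : y ≤ z) :
    B.mul y x ≤ B.mul z x := by
  rw [B.mul_comm y x, B.mul_comm z x]; exact B.mul_mono x y z h

lemma ContinuousTNorm.pow_add (B : ContinuousTNorm) (b : unitInterval) (m n : ℕ) :
    B.pow b (m + n) = B.mul (B.pow b m) (B.pow b n) := by
  induction m with
  | zero => simp [ContinuousTNorm.pow, B.one_mul]
  | succ k ih =>
      have : k + 1 + n = (k + n) + 1 := by ring
      rw [this]
      simp only [ContinuousTNorm.pow, ih, B.mul_assoc]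

lemma ContinuousTNorm.pow_antitone (B : ContinuousTNorm) (b : unitInterval) :
    Antitone (B.pow b) := by
  apply antitone_nat_of_succ_le
  intro n
  calc B.pow b (n + 1) = B.mul b (B.pow b n) := rfl
    _ ≤ B.mul 1 (B.pow b n) := B.mul_mono_left _ _ _ unitInterval.le_one'
    _ = B.pow b n := B.one_mul _

/-- for a continuous t-norm, if `a ≤ bⁿ` for every `n`, then `a · b = a`. -/
theorem tnorm_mul_eq_of_le_pow (B : ContinuousTNorm) (a b : unitInterval)
    (h : ∀ n : ℕ, a ≤ B.pow b n) : B.mul a b = a := by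
  set c : unitInterval := ⨅ n, B.pow b n with hc
  have htend : Filter.Tendsto (B.pow b) Filter.atTop (nhds c) :=
    tendsto_atTop_iInf (B.pow_antitone b)
  have hmulcont : ∀ x : unitInterval, Continuous (B.mul x) := fun x =>
    B.continuous.comp (continuous_const.prodMk continuous_id)
  -- c·c = c
  have hcc : B.mul c c = c := by
    have h1 : Filter.Tendsto (fun n => B.pow b (n + n)) Filter.atTop (nhds c) :=
      htend.comp (Filter.Tendsto.atTop_add_nonneg Filter.tendsto_id (fun _ => Nat.zero_le _))
    have h2 : Filter.Tendsto (fun n => B.mul (B.pow b n) (B.pow b n)) Filter.atTop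
        (nhds (B.mul c c)) := by
      have : Continuous fun p : unitInterval × unitInterval => B.mul p.1 p.2 := B.continuous
      exact (this.tendsto (c, c)).comp (htend.prodMk_nhds htend)
    have h1' := h1.congr (fun n => B.pow_add b n n)
    exact tendsto_nhds_unique h2 h1'
  have hac : a ≤ c := le_iInf h
  have hcb : c ≤ b := by
    calc c ≤ B.pow b 1 := iInf_le _ 1
      _ = b := by simp [ContinuousTNorm.pow, B.mul_one]
  -- a·c = a  via IVT
  have hamc : B.mul a c = a := by
    have h0 : B.mul 0 c = 0 := le_antisymm (by
        calc B.mul 0 c ≤ B.mul 0 1 := B.mul_mono _ _ _ unitInterval.le_one'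
          _ = 0 := B.mul_one _) (unitInterval.nonneg' : (0:unitInterval) ≤ _)
    have h1 : B.mul 1 c = c := B.one_mul c
    have hx : a ∈ Set.Icc (B.mul 0 c) (B.mul 1 c) := by
      rw [h0, h1]; exact ⟨unitInterval.nonneg', hac⟩
    have hfc : Continuous fun t => B.mul t c :=
      B.continuous.comp (continuous_id.prodMk continuous_const)
    obtain ⟨t, _, ht''⟩ := intermediate_value_Icc (zero_le_one) hfc.continuousOn hx
    have ht' : B.mul t c = a := ht''
    calc B.mul a c = B.mul (B.mul t c) c := by rw [ht']
      _ = B.mul t (B.mul c c) := B.mul_assoc _ _ _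
      _ = B.mul t c := by rw [hcc]
      _ = a := ht'
  refine le_antisymm ?_ ?_
  · calc B.mul a b ≤ B.mul a 1 := B.mul_mono _ _ _ unitInterval.le_one'
      _ = a := B.mul_one a
  · calc a = B.mul a c := hamc.symm
      _ ≤ B.mul a b := B.mul_mono _ _ _ hcb
end

section
/- For every continuous t-norm · on [0,1] and every b ∈ [0,1], the infimum c = inf { bⁿ : n ∈ ℕ } of the ·-powers of b satisfies c · b = c; in particular c is idempotent (c · c = c). -/
open Filter Topology

namespace ContinuousTNorm

variable (B : ContinuousTNorm)

theorem continuous_mul_left (x : unitInterval) : Continuous (B.mul x) :=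
  B.continuous.comp (Continuous.prodMk_right x)

theorem mul_le_left (x y : unitInterval) : B.mul x y ≤ x :=
  (B.mul_mono x y 1 le_top).trans_eq (B.mul_one x)

theorem pow_eq_iterate (b : unitInterval) : B.pow b = fun n => (B.mul b)^[n] 1 := by
  funext n
  induction n with
  | zero => rfl
  | succ n ih => rw [Function.iterate_succ_apply', ← ih]; rfl

theorem antitone_pow (b : unitInterval) : Antitone (B.pow b) :=
  antitone_nat_of_succ_le fun n =>
    (B.mul_comm b (B.pow b n)).trans_le (B.mul_le_left _ _)

theorem tendsto_pow_atTop_iInf (b : unitInterval) :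
    Tendsto (B.pow b) atTop (𝓝 (⨅ n, B.pow b n)) :=
  tendsto_atTop_iInf (B.antitone_pow b)

theorem mul_iInf_pow (b : unitInterval) : B.mul b (⨅ n, B.pow b n) = ⨅ n, B.pow b n := by
  have h := B.tendsto_pow_atTop_iInf b
  rw [B.pow_eq_iterate] at h ⊢
  exact isFixedPt_of_tendsto_iterate h (B.continuous_mul_left b).continuousAt

theorem mul_pow_of_mul_eq {b c : unitInterval} (h : B.mul b c = c) (n : ℕ) :
    B.mul c (B.pow b n) = c := by
  induction n with
  | zero => exact B.mul_one c
  | succ n ih =>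
    change B.mul c (B.mul b (B.pow b n)) = c
    rw [← B.mul_assoc, B.mul_comm c b, h, ih]

theorem mul_eq_of_forall_mul_pow {b c d : unitInterval} (h : ∀ n, B.mul c (B.pow b n) = c)
    (hd : Tendsto (B.pow b) atTop (𝓝 d)) : B.mul c d = c :=
  (isClosed_eq (B.continuous_mul_left c) continuous_const).mem_of_tendsto hd
    (Eventually.of_forall h)

end ContinuousTNorm

/-- the infimum `c` of the `·`-powers of `b` satisfies `c · b = c`;
in particular `c` is idempotent. -/
theorem tnorm_iInf_pow_mul_self (B : ContinuousTNorm) (b c : unitInterval)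
    (hc : c = ⨅ n : ℕ, B.pow b n) : B.mul c b = c ∧ B.mul c c = c := by
  subst hc
  have hbc := B.mul_iInf_pow b
  exact ⟨(B.mul_comm _ _).trans hbc,
    B.mul_eq_of_forall_mul_pow (B.mul_pow_of_mul_eq hbc) (B.tendsto_pow_atTop_iInf b)⟩
end

section
/- Every totally ordered Wajsberg hoop H satisfying the quasi-identity (K) — for all a, b ∈ H, if a ≤ bⁿ for every n ∈ ℕ then a ≤ a·b — is simple, i.e., its only filters are {1} and H. -/
/-! ## Hoops -/

/-- A hoop: a commutative monoid with an operation `→` (`himp`) satisfying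
`x→x = 1`, `x·(x→y) = y·(y→x)` and `x→(y→z) = (x·y)→z`. -/
class Hoop (H : Type*) extends CommMonoid H where
  himp : H → H → H
  himp_self : ∀ x : H, himp x x = 1
  mul_himp_comm : ∀ x y : H, x * himp x y = y * himp y x
  himp_himp : ∀ x y z : H, himp x (himp y z) = himp (x * y) z

namespace Hoop

variable {H : Type*} [Hoop H]

/-- The hoop order: `x ≤ y` iff `x → y = 1`. -/
def hle (x y : H) : Prop := himp x y = 1

/-- A filter of a hoop: a nonempty subset closed under `·` and upward closed
with respect to the hoop order. -/
def IsFilter (F : Set H) : Prop :=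
  F.Nonempty ∧ (∀ x ∈ F, ∀ y ∈ F, x * y ∈ F) ∧ ∀ x ∈ F, ∀ y : H, hle x y → y ∈ F

end Hoop


/-! In a totally ordered hoop, an element `b ≠ 1` either has a power below `a`, or else
`a ≤ bⁿ` for all `n`. In the latter case `t := b → a` is also below every `bⁿ` (if `bⁿ ≤ t` then
`bⁿ⁺¹ ≤ t·b ≤ a`), so (K) gives `t ≤ t·b ≤ a`, i.e. `b → a = a`. The Wajsberg identity then
yields `b = (a → b) → b = (b → a) → a = 1`. Hence a filter containing some `b ≠ 1` contains
everything. -/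

namespace Hoop

variable {H : Type*} [Hoop H]

lemma hle_antisymm {x y : H} (hxy : hle x y) (hyx : hle y x) : x = y := by
  simpa [show himp x y = 1 from hxy, show himp y x = 1 from hyx] using mul_himp_comm x y

lemma himp_himp_himp_comm (x y z : H) :
    himp (himp x y) (himp x z) = himp (himp y x) (himp y z) := by
  rw [himp_himp, himp_himp, mul_comm (himp x y) x, mul_comm (himp y x) y, mul_himp_comm x y]

lemma himp_himp_one (x y : H) : himp (himp y x) 1 = 1 := by
  simpa only [himp_self] using (himp_himp_himp_comm x y y).symm

lemma one_himp (x : H) : himp 1 x = x := by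
  have hle_one_himp : hle x (himp 1 x) := by
    rw [hle, himp_himp, mul_one, himp_self]
  have one_himp_hle : hle (himp 1 x) x := by
    have h := mul_himp_comm 1 x
    rw [one_mul] at h
    rw [hle, h, mul_comm, ← himp_himp, himp_self]
    exact himp_himp_one 1 x
  exact hle_antisymm one_himp_hle hle_one_himp

lemma himp_one (x : H) : himp x 1 = 1 := by
  simpa only [one_himp] using himp_himp_one x 1

lemma hle_trans {x y z : H} (hxy : hle x y) (hyz : hle y z) : hle x z := by
  show himp x z = 1
  simpa only [show himp x y = 1 from hxy, show himp y z = 1 from hyz, one_himp, himp_one]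
    using himp_himp_himp_comm x y z

lemma mul_hle_left (x y : H) : hle (x * y) x := by
  rw [hle, mul_comm, ← himp_himp, himp_self, himp_one]

lemma hle_himp_left (x y : H) : hle x (himp y x) := by
  rw [hle, himp_himp]
  exact mul_hle_left x y

lemma mul_himp_hle (x y : H) : hle (x * himp x y) y := by
  rw [hle, mul_comm, ← himp_himp, himp_self]

lemma mul_hle_mul_right {x y : H} (h : hle x y) (z : H) : hle (x * z) (y * z) := by
  have h' : hle x (himp z (y * z)) := hle_trans h (by rw [hle, himp_himp, himp_self])
  rwa [hle, himp_himp] at h'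

lemma IsFilter.one_mem {F : Set H} (hF : IsFilter F) : (1 : H) ∈ F := by
  obtain ⟨⟨x, hx⟩, -, hup⟩ := hF
  exact hup x hx 1 (himp_one x)

lemma IsFilter.pow_mem {F : Set H} (hF : IsFilter F) {b : H} (hb : b ∈ F) (n : ℕ) :
    b ^ n ∈ F := by
  induction n with
  | zero => simpa using hF.one_mem
  | succ n ih => simpa only [pow_succ] using hF.2.1 _ ih _ hb

lemma eq_one_of_hle_of_himp_eq
    (wajsberg : ∀ x y : H, himp (himp x y) y = himp (himp y x) x)
    {a b : H} (hab : hle a b) (hba : himp b a = a) : b = 1 := by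
  simpa only [show himp a b = 1 from hab, one_himp, hba, himp_self] using wajsberg a b

lemma himp_hle_of_forall_not_pow_hle (total : ∀ x y : H, hle x y ∨ hle y x)
    (K : ∀ a b : H, (∀ n : ℕ, hle a (b ^ n)) → hle a (a * b))
    {a b : H} (h : ∀ n : ℕ, ¬ hle (b ^ n) a) : hle (himp b a) a := by
  have mul_hle : hle (himp b a * b) a := by
    rw [mul_comm]
    exact mul_himp_hle b a
  have hle_pow : ∀ n : ℕ, hle (himp b a) (b ^ n) := fun n =>
    (total _ _).resolve_right fun hpow => h (n + 1) <| by
      rw [pow_succ]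
      exact hle_trans (mul_hle_mul_right hpow b) mul_hle
  exact hle_trans (K _ b hle_pow) mul_hle

lemma exists_pow_hle_of_ne_one (total : ∀ x y : H, hle x y ∨ hle y x)
    (wajsberg : ∀ x y : H, himp (himp x y) y = himp (himp y x) x)
    (K : ∀ a b : H, (∀ n : ℕ, hle a (b ^ n)) → hle a (a * b))
    {b : H} (hb : b ≠ 1) (a : H) : ∃ n : ℕ, hle (b ^ n) a := by
  by_contra! h
  have hab : hle a b := (total a b).resolve_right (by simpa using h 1)
  have hba : himp b a = a :=
    hle_antisymm (himp_hle_of_forall_not_pow_hle total K h) (hle_himp_left a b)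
  exact hb (eq_one_of_hle_of_himp_eq wajsberg hab hba)

end Hoop

/-- every totally ordered Wajsberg hoop satisfying the quasi-identity (K)
(`a ≤ bⁿ` for all `n` implies `a ≤ a·b`) is simple: its only filters are `{1}` and `H`. -/
theorem wajsberg_hoop_K_simple (H : Type*) [Hoop H]
    (total : ∀ x y : H, Hoop.hle x y ∨ Hoop.hle y x)
    (wajsberg : ∀ x y : H, Hoop.himp (Hoop.himp x y) y = Hoop.himp (Hoop.himp y x) x)
    (K : ∀ a b : H, (∀ n : ℕ, Hoop.hle a (b ^ n)) → Hoop.hle a (a * b))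
    (F : Set H) (hF : Hoop.IsFilter F) :
    F = {1} ∨ F = Set.univ := by
  by_cases hF1 : F ⊆ {1}
  · exact Or.inl (hF1.antisymm (Set.singleton_subset_iff.2 hF.one_mem))
  · obtain ⟨b, hbF, hb⟩ := Set.not_subset.1 hF1
    refine Or.inr (Set.eq_univ_of_forall fun a => ?_)
    obtain ⟨n, hn⟩ := Hoop.exists_pow_hle_of_ne_one total wajsberg K hb a
    exact hF.2.2 _ (hF.pow_mem hbF n) a hn
end

section
/- Any BL-chain A satisfying the generalized quasi-identity (K) — for all a, b ∈ A, if a ≤ bⁿ for every n ∈ ℕ then a ≤ a·b — is an ordinal sum of a family, indexed by a totally ordered set, of simple totally ordered Wajsberg hoops. -/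
/-! ## BL-chains and ordinal sum decompositions -/

/-- A BL-chain: a bounded linearly ordered set with a commutative monoid operation `·`
(unit `1`, the top element) monotone in each argument, and a residuum `→` satisfying
`x·y ≤ z ↔ x ≤ (y→z)` and the divisibility law `x·(x→y) = min x y`. -/
class BLChain (A : Type*) extends LinearOrder A, CommMonoid A where
  bot : A
  bot_le : ∀ x : A, bot ≤ x
  le_one : ∀ x : A, x ≤ 1
  mul_le_mul_of_le : ∀ x y : A, x ≤ y → ∀ z : A, z * x ≤ z * y
  himp : A → A → A
  mul_le_iff_le_himp : ∀ x y z : A, x * y ≤ z ↔ x ≤ himp y z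
  div : ∀ x y : A, x * himp x y = min x y

namespace BLChain

variable {A : Type*} [BLChain A]

/-- An element is idempotent if `a · a = a`. -/
def Idem (a : A) : Prop := a * a = a

/-- `IsOrdinalSumOfWajsbergHoops H` : the BL-chain `A` is the ordinal sum of the family
of subsets `H i` (indexed by the totally ordered set `I`), where each `H i`, equipped
with the restrictions of `·` and `→` of `A`, is a (totally ordered) Wajsberg hoop, and
the operations of `A` are given from the components by the ordinal-sum rules. -/
def IsOrdinalSumOfWajsbergHoops {I : Type*} [LinearOrder I] (H : I → Set A) : Prop :=
  -- the union of the components is all of `A`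
  (∀ a : A, ∃ i, a ∈ H i) ∧
  -- distinct components intersect in `{1}` at most
  (∀ i j, i ≠ j → H i ∩ H j ⊆ {1}) ∧
  -- each component contains the unit `1` and is closed under `·` and `→`,
  -- so that it is a subhoop of `A`
  (∀ i, (1 : A) ∈ H i) ∧
  (∀ i, ∀ x ∈ H i, ∀ y ∈ H i, x * y ∈ H i ∧ himp x y ∈ H i) ∧
  -- each component is a Wajsberg hoop
  (∀ i, ∀ x ∈ H i, ∀ y ∈ H i, himp (himp x y) y = himp (himp y x) x) ∧
  -- ordinal-sum rules for elements in different components: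
  -- if `x ∈ H i ∖ {1}` and `y ∈ H j` with `i < j`, then `x → y = 1` and `x · y = x`
  (∀ i j, i < j → ∀ x ∈ H i, x ≠ 1 → ∀ y ∈ H j, himp x y = 1 ∧ x * y = x) ∧
  -- if `x ∈ H i` and `y ∈ H j` with `i > j`, then `x → y = y`
  (∀ i j, j < i → ∀ x ∈ H i, ∀ y ∈ H j, himp x y = y)

/-- A filter of the component subhoop `Hi` of `A`: a nonempty subset of `Hi` closed
under `·` and upward closed in `Hi` (w.r.t. the hoop order of `Hi`, which is the
restriction of the order of `A`). -/
def IsComponentFilter (Hi : Set A) (F : Set A) : Prop :=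
  F ⊆ Hi ∧ F.Nonempty ∧ (∀ x ∈ F, ∀ y ∈ F, x * y ∈ F) ∧
    ∀ x ∈ F, ∀ y ∈ Hi, x ≤ y → y ∈ F

/-- The component subhoop `Hi` is simple: its only filters are `{1}` and `Hi`. -/
def IsSimpleComponent (Hi : Set A) : Prop :=
  ∀ F : Set A, IsComponentFilter Hi F → F = {1} ∨ F = Hi

end BLChain

/-! ### Auxiliary development: archimedean classes of a BL-chain -/

section BLAux

variable {A : Type} [BLChain A]

local infixr:60 " ⇝ " => BLChain.himp

private lemma bl_mul_le_left (x y : A) : x * y ≤ x := by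
  have h := BLChain.mul_le_mul_of_le y 1 (BLChain.le_one y) x
  simpa using h

private lemma bl_mul_le_mul {x y z w : A} (h1 : x ≤ y) (h2 : z ≤ w) : x * z ≤ y * w :=
  calc x * z ≤ x * w := BLChain.mul_le_mul_of_le z w h2 x
    _ = w * x := mul_comm _ _
    _ ≤ w * y := BLChain.mul_le_mul_of_le x y h1 w
    _ = y * w := mul_comm _ _

private lemma bl_pow_le_pow {x y : A} (h : x ≤ y) : ∀ n : ℕ, x ^ n ≤ y ^ n
  | 0 => by simp
  | n+1 => by
      rw [pow_succ, pow_succ]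
      exact bl_mul_le_mul (bl_pow_le_pow h n) h

private lemma bl_le_himp (x y : A) : y ≤ x ⇝ y :=
  (BLChain.mul_le_iff_le_himp y x y).mp (bl_mul_le_left y x)

private lemma bl_himp_eq_one {x y : A} (h : x ≤ y) : x ⇝ y = 1 := by
  apply le_antisymm (BLChain.le_one _)
  exact (BLChain.mul_le_iff_le_himp 1 x y).mp (by simpa using h)

private lemma bl_one_himp (y : A) : (1:A) ⇝ y = y := by
  have h := BLChain.div 1 y
  simpa [min_eq_right (BLChain.le_one y)] using h

private lemma bl_mul_himp_of_le {x y : A} (h : y ≤ x) : x * (x ⇝ y) = y := by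
  rw [BLChain.div, min_eq_right h]

/-- The archimedean equivalence: mutual power-domination. -/
def blRel (x y : A) : Prop := (∃ n : ℕ, x ^ n ≤ y) ∧ (∃ n : ℕ, y ^ n ≤ x)

private lemma blRel_refl (x : A) : blRel x x := ⟨⟨1, by simp⟩, ⟨1, by simp⟩⟩

private lemma blRel_symm {x y : A} (h : blRel x y) : blRel y x := ⟨h.2, h.1⟩

private lemma blRel_trans {x y z : A} (h1 : blRel x y) (h2 : blRel y z) : blRel x z := by
  obtain ⟨⟨n, hn⟩, ⟨n', hn'⟩⟩ := h1
  obtain ⟨⟨m, hm⟩, ⟨m', hm'⟩⟩ := h2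
  constructor
  · exact ⟨n * m, by rw [pow_mul]; exact le_trans (bl_pow_le_pow hn m) hm⟩
  · exact ⟨m' * n', by rw [pow_mul]; exact le_trans (bl_pow_le_pow hm' n') hn'⟩

/-- Products stay in the archimedean class. -/
private lemma bl_mulMem {x y : A} (h : blRel x y) : blRel (x * y) x := by
  obtain ⟨⟨m, hm⟩, -⟩ := h
  refine ⟨⟨1, by simpa using bl_mul_le_left x y⟩, ⟨m + 1, ?_⟩⟩
  rw [pow_succ]
  calc x ^ m * x ≤ y * x := bl_mul_le_mul hm (le_refl x)
    _ = x * y := mul_comm _ _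

/-- Key lemma (uses (K)): residua stay in the archimedean class. -/
private lemma bl_himp_rel (K : ∀ a b : A, (∀ n : ℕ, a ≤ b ^ n) → a ≤ a * b)
    {x y : A} (h : blRel x y) (hyx : y < x) : blRel (x ⇝ y) y := by
  obtain ⟨⟨m, hm⟩, -⟩ := h
  have hkey : ∃ k : ℕ, (x ⇝ y) ^ k ≤ y := by
    by_contra hc
    have hx : ∀ k : ℕ, x ≤ (x ⇝ y) ^ k := by
      intro k
      by_contra hk
      have hk' : (x ⇝ y) ^ k ≤ x := le_of_not_ge hk
      have : (x ⇝ y) ^ (k * m) ≤ y := by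
        rw [pow_mul]; exact le_trans (bl_pow_le_pow hk' m) hm
      exact hc ⟨k * m, this⟩
    have hK := K x (x ⇝ y) hx
    rw [bl_mul_himp_of_le hyx.le] at hK
    exact absurd hK (not_le.mpr hyx)
  obtain ⟨k, hk⟩ := hkey
  exact ⟨⟨k, hk⟩, ⟨1, by simpa using bl_le_himp x y⟩⟩

/-- Ordinal-sum product rule across distinct classes (uses (K)). -/
private lemma bl_lowmul (K : ∀ a b : A, (∀ n : ℕ, a ≤ b ^ n) → a ≤ a * b)
    {x y : A} (h : ¬ blRel x y) (hxy : x < y) : x * y = x := by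
  have hx : ∀ n : ℕ, x ≤ y ^ n := by
    intro n
    by_contra hn
    exact h ⟨⟨1, by simpa using hxy.le⟩, ⟨n, le_of_not_ge hn⟩⟩
  exact le_antisymm (bl_mul_le_left x y) (K x y hx)

/-- Ordinal-sum residuum rule across distinct classes (uses (K)). -/
private lemma bl_highimp (K : ∀ a b : A, (∀ n : ℕ, a ≤ b ^ n) → a ≤ a * b)
    {x y : A} (h : ¬ blRel x y) (hyx : y < x) : x ⇝ y = y := by
  have hxc : x * (x ⇝ y) = y := bl_mul_himp_of_le hyx.le
  have hkey : ∃ k : ℕ, (x ⇝ y) ^ k ≤ y := by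
    by_contra hcon
    have hx : ∀ k : ℕ, x ≤ (x ⇝ y) ^ k := by
      intro k
      by_contra hk
      have : (x ⇝ y) ^ (k + 1) ≤ y := by
        rw [pow_succ]
        calc (x ⇝ y) ^ k * (x ⇝ y) ≤ x * (x ⇝ y) :=
              bl_mul_le_mul (le_of_not_ge hk) (le_refl _)
          _ = y := hxc
      exact hcon ⟨k + 1, this⟩
    have hK := K x (x ⇝ y) hx
    rw [hxc] at hK
    exact absurd hK (not_le.mpr hyx)
  obtain ⟨k, hk⟩ := hkey
  have hcx : ∀ n : ℕ, (x ⇝ y) ≤ x ^ n := by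
    intro n
    by_contra hn
    refine h ⟨⟨n * k, ?_⟩, ⟨1, by simpa using hyx.le⟩⟩
    rw [pow_mul]
    exact le_trans (bl_pow_le_pow (le_of_not_ge hn) k) hk
  have h2 := K (x ⇝ y) x hcx
  rw [mul_comm (x ⇝ y) x, hxc] at h2
  exact le_antisymm h2 (bl_le_himp x y)

/-- Wajsberg identity inside an archimedean class (uses (K)): the descent argument. -/
private lemma bl_wajs (K : ∀ a b : A, (∀ n : ℕ, a ≤ b ^ n) → a ≤ a * b)
    {x y : A} (h : blRel x y) (hyx : y < x) : ((x ⇝ y) ⇝ y) = x := by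
  have hxc : x * (x ⇝ y) = y := bl_mul_himp_of_le hyx.le
  -- first, y < x ⇝ y
  have hyc : y < x ⇝ y := by
    rcases lt_or_ge y (x ⇝ y) with h' | h'
    · exact h'
    · exfalso
      obtain ⟨⟨m, hm⟩, -⟩ := h
      have key : ∀ m : ℕ, ¬ x ^ m ≤ y := by
        intro m
        induction m with
        | zero =>
          intro hm0
          simp only [pow_zero] at hm0
          have hy1 : y = 1 := le_antisymm (BLChain.le_one y) hm0
          rw [hy1] at hyx
          exact absurd (BLChain.le_one x) (not_le.mpr hyx)
        | succ n ih =>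
          intro hm1
          rw [pow_succ] at hm1
          exact ih (le_trans ((BLChain.mul_le_iff_le_himp _ x y).mp hm1) h')
      exact key m hm
  have hrc : blRel (x ⇝ y) y := bl_himp_rel K h hyx
  have hxd : x ≤ (x ⇝ y) ⇝ y :=
    (BLChain.mul_le_iff_le_himp x (x ⇝ y) y).mp (le_of_eq hxc)
  have hrd : blRel ((x ⇝ y) ⇝ y) y := bl_himp_rel K hrc hyc
  have hyd : y ≤ (x ⇝ y) ⇝ y := le_trans hyx.le hxd
  -- triple residuation: (((x ⇝ y) ⇝ y) ⇝ y) = x ⇝ y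
  have hdy : (((x ⇝ y) ⇝ y) ⇝ y) = x ⇝ y := by
    apply le_antisymm
    · refine (BLChain.mul_le_iff_le_himp _ x y).mp ?_
      calc (((x ⇝ y) ⇝ y) ⇝ y) * x
          ≤ (((x ⇝ y) ⇝ y) ⇝ y) * ((x ⇝ y) ⇝ y) :=
            BLChain.mul_le_mul_of_le x _ hxd _
        _ = ((x ⇝ y) ⇝ y) * (((x ⇝ y) ⇝ y) ⇝ y) := mul_comm _ _
        _ = y := bl_mul_himp_of_le hyd
    · refine (BLChain.mul_le_iff_le_himp _ _ y).mp ?_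
      exact le_of_eq (bl_mul_himp_of_le hyc.le)
  apply le_antisymm _ hxd
  by_contra hdx
  have hxd2 : x < (x ⇝ y) ⇝ y := lt_of_not_ge hdx
  have hud : ((x ⇝ y) ⇝ y) * (((x ⇝ y) ⇝ y) ⇝ x) = x := bl_mul_himp_of_le hxd2.le
  have hrdx : blRel ((x ⇝ y) ⇝ y) x := blRel_trans hrd (blRel_symm h)
  have hru : blRel (((x ⇝ y) ⇝ y) ⇝ x) x := bl_himp_rel K hrdx hxd2
  obtain ⟨⟨k, hk⟩, -⟩ := blRel_trans hru h
  -- the descent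
  have desc : ∀ j : ℕ, (((x ⇝ y) ⇝ y) ⇝ x) ^ j * x ≤ y → x ≤ y := by
    intro j
    induction j with
    | zero => intro hj; simpa using hj
    | succ n ih =>
      intro hj
      apply ih
      have h1 : (((x ⇝ y) ⇝ y) ⇝ x) ^ (n + 1) ≤ x ⇝ y :=
        (BLChain.mul_le_iff_le_himp _ x y).mp hj
      have h1' : (((x ⇝ y) ⇝ y) ⇝ x) ^ (n + 1) ≤ ((x ⇝ y) ⇝ y) ⇝ y :=
        le_trans h1 (le_of_eq hdy.symm)
      have h2 : (((x ⇝ y) ⇝ y) ⇝ x) ^ (n + 1) * ((x ⇝ y) ⇝ y) ≤ y :=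
        (BLChain.mul_le_iff_le_himp _ _ y).mpr h1'
      calc (((x ⇝ y) ⇝ y) ⇝ x) ^ n * x
          = (((x ⇝ y) ⇝ y) ⇝ x) ^ n * (((x ⇝ y) ⇝ y) * (((x ⇝ y) ⇝ y) ⇝ x)) := by
            rw [hud]
        _ = (((x ⇝ y) ⇝ y) ⇝ x) ^ (n + 1) * ((x ⇝ y) ⇝ y) := by
            rw [pow_succ, mul_comm ((x ⇝ y) ⇝ y) (((x ⇝ y) ⇝ y) ⇝ x), mul_assoc]
        _ ≤ y := h2
  have hxy := desc k (le_trans (bl_mul_le_mul hk (le_refl x)) (bl_mul_le_left y x))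
  exact absurd hxy (not_le.mpr hyx)

/-- The setoid of archimedean classes. -/
def blSetoid (A : Type) [BLChain A] : Setoid A :=
  ⟨blRel, ⟨blRel_refl, blRel_symm, blRel_trans⟩⟩

/-- The index set: archimedean classes. -/
def bQuot (A : Type) [BLChain A] : Type := Quotient (blSetoid A)

/-- Class of an element. -/
def bmk (x : A) : bQuot A := Quotient.mk (blSetoid A) x

private lemma bl_le_or_rel_mono {x y x' y' : A} (hx : blRel x x') (hy : blRel y y')
    (h : x ≤ y ∨ blRel x y) : x' ≤ y' ∨ blRel x' y' := by
  rcases h with h | h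
  · by_cases h' : x' ≤ y'
    · exact Or.inl h'
    · right
      obtain ⟨⟨a, ha⟩, -⟩ := blRel_symm hx
      obtain ⟨⟨b, hb⟩, -⟩ := hy
      refine ⟨⟨a * b, ?_⟩, ⟨1, by simpa using le_of_not_ge h'⟩⟩
      rw [pow_mul]
      exact le_trans (bl_pow_le_pow (le_trans ha h) b) hb
  · exact Or.inr (blRel_trans (blRel_trans (blRel_symm hx) h) hy)

/-- The order relation on classes. -/
def bqle : bQuot A → bQuot A → Prop :=
  Quotient.lift₂ (fun x y => x ≤ y ∨ blRel x y)
    (fun _ _ _ _ ha hb =>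
      propext ⟨bl_le_or_rel_mono ha hb, bl_le_or_rel_mono (blRel_symm ha) (blRel_symm hb)⟩)

noncomputable instance bQuotLinearOrder : LinearOrder (bQuot A) where
  le := bqle
  le_refl i := Quotient.inductionOn i fun x => Or.inl (le_refl x)
  le_trans i j k := Quotient.inductionOn₃ i j k (fun x y z hxy hyz => by
    replace hxy : x ≤ y ∨ blRel x y := hxy
    replace hyz : y ≤ z ∨ blRel y z := hyz
    show x ≤ z ∨ blRel x z
    rcases hxy with h1 | h1 <;> rcases hyz with h2 | h2
    · exact Or.inl (le_trans h1 h2)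
    · by_cases h' : x ≤ z
      · exact Or.inl h'
      · right
        obtain ⟨⟨m, hm⟩, -⟩ := h2
        exact ⟨⟨m, le_trans (bl_pow_le_pow h1 m) hm⟩, ⟨1, by simpa using le_of_not_ge h'⟩⟩
    · by_cases h' : x ≤ z
      · exact Or.inl h'
      · right
        obtain ⟨⟨m, hm⟩, -⟩ := h1
        exact ⟨⟨m, le_trans hm h2⟩, ⟨1, by simpa using le_of_not_ge h'⟩⟩
    · exact Or.inr (blRel_trans h1 h2))
  le_antisymm i j := Quotient.inductionOn₂ i j (fun x y h1 h2 => by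
    replace h1 : x ≤ y ∨ blRel x y := h1
    replace h2 : y ≤ x ∨ blRel y x := h2
    apply Quotient.sound
    show blRel x y
    rcases h1 with h1 | h1
    · rcases h2 with h2 | h2
      · rw [le_antisymm h1 h2]; exact blRel_refl y
      · exact blRel_symm h2
    · exact h1)
  le_total i j := Quotient.inductionOn₂ i j (fun x y => by
    rcases le_total x y with h | h
    · exact Or.inl (Or.inl h)
    · exact Or.inr (Or.inl h))
  toDecidableLE := fun _ _ => Classical.dec _

private lemma bqlt_iff {x y : A} : bmk x < bmk y ↔ x < y ∧ ¬ blRel x y := by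
  constructor
  · intro h
    have h1 : x ≤ y ∨ blRel x y := le_of_lt h
    have h2 : ¬ (y ≤ x ∨ blRel y x) := not_le_of_gt h
    constructor
    · rcases h1 with h1 | h1
      · exact lt_of_le_not_ge h1 (fun hyx => h2 (Or.inl hyx))
      · exact absurd (Or.inr (blRel_symm h1)) h2
    · intro hr; exact h2 (Or.inr (blRel_symm hr))
  · rintro ⟨h1, h2⟩
    apply lt_of_le_not_ge
    · exact Or.inl h1.le
    · intro hle
      replace hle : y ≤ x ∨ blRel y x := hle
      rcases hle with h | h
      · exact absurd h1 (not_lt.mpr h)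
      · exact h2 (blRel_symm h)

end BLAux

/-- any BL-chain satisfying the generalized quasi-identity (K)
(`a ≤ bⁿ` for all `n ∈ ℕ` implies `a ≤ a·b`) is an ordinal sum, indexed by a totally
ordered set, of simple totally ordered Wajsberg hoops. -/
theorem blchain_K_ordinal_sum_of_simple (A : Type) [BLChain A]
    (K : ∀ a b : A, (∀ n : ℕ, a ≤ b ^ n) → a ≤ a * b) :
    ∃ (I : Type) (_ : LinearOrder I) (H : I → Set A),
      BLChain.IsOrdinalSumOfWajsbergHoops H ∧ ∀ i, BLChain.IsSimpleComponent (H i) := by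
  classical
  refine ⟨bQuot A, inferInstance, fun i => {a : A | bmk a = i ∨ a = 1}, ⟨?_, ?_, ?_, ?_, ?_, ?_, ?_⟩, ?_⟩
  · -- cover
    exact fun a => ⟨bmk a, Or.inl rfl⟩
  · -- intersections
    intro i j hij a ⟨hai, haj⟩
    simp only [Set.mem_setOf_eq] at hai haj
    rcases hai with hai | hai
    · rcases haj with haj | haj
      · exact absurd (hai ▸ haj) hij
      · exact haj
    · exact hai
  · -- 1 ∈ H i
    exact fun i => Or.inr rfl
  · -- closure under · and ⇝
    intro i x hx y hy
    simp only [Set.mem_setOf_eq] at hx hy ⊢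
    constructor
    · -- product
      rcases hx with hx | hx
      · rcases hy with hy | hy
        · left
          have hr : blRel x y := Quotient.exact (hx.trans hy.symm)
          have : bmk (x * y) = bmk x := Quotient.sound (bl_mulMem hr)
          rw [this, hx]
        · rw [hy, mul_one]; exact Or.inl hx
      · rw [hx, one_mul]; exact hy
    · -- residuum
      rcases hx with hx | hx
      · rcases hy with hy | hy
        · rcases le_or_gt x y with hle | hlt
          · right; exact bl_himp_eq_one hle
          · left
            have hr : blRel x y := Quotient.exact (hx.trans hy.symm)
            have : bmk (BLChain.himp x y) = bmk y := Quotient.sound (bl_himp_rel K hr hlt)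
            rw [this, hy]
        · rw [hy]; right; exact bl_himp_eq_one (BLChain.le_one x)
      · rw [hx, bl_one_himp]; exact hy
  · -- Wajsberg identity
    intro i x hx y hy
    simp only [Set.mem_setOf_eq] at hx hy
    by_cases hx1 : x = 1
    · rw [hx1, bl_one_himp y, bl_himp_eq_one (le_refl y),
        bl_himp_eq_one (BLChain.le_one y), bl_one_himp 1]
    · by_cases hy1 : y = 1
      · rw [hy1, bl_one_himp x, bl_himp_eq_one (le_refl x),
          bl_himp_eq_one (BLChain.le_one x), bl_one_himp 1]
      · have hxi : bmk x = i := hx.resolve_right hx1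
        have hyi : bmk y = i := hy.resolve_right hy1
        have hr : blRel x y := Quotient.exact (hxi.trans hyi.symm)
        rcases lt_trichotomy x y with hlt | heq | hlt
        · rw [bl_himp_eq_one hlt.le, bl_one_himp, bl_wajs K (blRel_symm hr) hlt]
        · rw [heq]
        · rw [bl_wajs K hr hlt, bl_himp_eq_one hlt.le, bl_one_himp]
  · -- lower component rules
    intro i j hij x hx hx1 y hy
    simp only [Set.mem_setOf_eq] at hx hy
    have hxi : bmk x = i := hx.resolve_right hx1
    rcases hy with hyj | hy1
    · rw [← hxi, ← hyj] at hij
      obtain ⟨hlt, hnr⟩ := bqlt_iff.mp hij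
      exact ⟨bl_himp_eq_one hlt.le, bl_lowmul K hnr hlt⟩
    · rw [hy1]
      exact ⟨bl_himp_eq_one (BLChain.le_one x), mul_one x⟩
  · -- higher component rule
    intro i j hij x hx y hy
    simp only [Set.mem_setOf_eq] at hx hy
    by_cases hx1 : x = 1
    · rw [hx1, bl_one_himp]
    · by_cases hy1 : y = 1
      · rw [hy1]; exact bl_himp_eq_one (BLChain.le_one x)
      · have hxi : bmk x = i := hx.resolve_right hx1
        have hyj : bmk y = j := hy.resolve_right hy1
        rw [← hxi, ← hyj] at hij
        obtain ⟨hlt, hnr⟩ := bqlt_iff.mp hij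
        exact bl_highimp K (fun hr => hnr (blRel_symm hr)) hlt
  · -- simplicity
    intro i F hF
    obtain ⟨hFH, hFne, hFmul, hFup⟩ := hF
    by_cases hall : ∀ z ∈ F, z = 1
    · left
      ext z
      simp only [Set.mem_singleton_iff]
      constructor
      · exact fun hz => hall z hz
      · intro hz
        obtain ⟨w, hw⟩ := hFne
        have hw1 := hall w hw
        rw [hz, ← hw1]
        exact hw
    · right
      push_neg at hall
      obtain ⟨p, hpF, hp1⟩ := hall
      have hpH := hFH hpF
      simp only [Set.mem_setOf_eq] at hpH
      have hpi : bmk p = i := hpH.resolve_right hp1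
      have h1F : (1:A) ∈ F := hFup p hpF 1 (Or.inr rfl) (BLChain.le_one p)
      have hpow : ∀ n : ℕ, p ^ n ∈ F := by
        intro n
        induction n with
        | zero => rw [pow_zero]; exact h1F
        | succ m ih => rw [pow_succ]; exact hFmul _ ih _ hpF
      ext q
      constructor
      · exact fun h => hFH h
      · intro hq
        simp only [Set.mem_setOf_eq] at hq
        rcases hq with hqi | hq1
        · by_cases hq1 : q = 1
          · rw [hq1]; exact h1F
          · have hr : blRel p q := Quotient.exact (hpi.trans hqi.symm)
            obtain ⟨⟨n, hn⟩, -⟩ := hr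
            exact hFup _ (hpow n) q (Or.inl hqi) hn
        · rw [hq1]; exact h1F
end

section
/- Let A = ⊕_{i∈I} H_i be a BL-chain represented as an ordinal sum of totally ordered Wajsberg hoops, and let (a_x)_{x∈X} be a family of elements of A. (1) If the infimum inf_x a_x exists and (inf_x a_x)² = inf_x (a_x²), then the family is ∧-connected (there exist i ∈ I and x ∈ X with inf_x a_x ∈ H_i and a_x ∈ H_i) or inf_x a_x is idempotent. (2) If the supremum sup_x a_x exists, then the family is ∨-connected (there exist i ∈ I and x ∈ X with sup_x a_x ∈ H_i and a_x ∈ H_i) or sup_x a_x is idempotent. -/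
/-!
If the infimum `m` shares no component with any member of the family, then every `a x`
lies in a strictly higher component than `m` (in a lower one it would be below `m`, which
is impossible for a lower bound unless the two coincide). Elements of lower components are
below everything in higher ones, so `m ≤ (a x)²` for all `x`, whence `m ≤ m²`. Dually, a
supremum `s` not sharing a component with the family sits above all of it, and an element
`y` of a lower component satisfies `y = y · s ≤ s²`, so again `s ≤ s²`.
-/

namespace BLChain

variable {A : Type*} [BLChain A]

lemma le_of_himp_eq_one {x y : A} (h : himp x y = 1) : x ≤ y := by
  have hdiv := div x y
  rw [h, mul_one] at hdiv
  exact hdiv ▸ min_le_right x y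

lemma mul_self_le (x : A) : x * x ≤ x := by
  simpa using mul_le_mul_of_le x 1 (le_one x) x

lemma idem_one : Idem (1 : A) := mul_one 1

lemma idem_of_le_mul_self {x : A} (h : x ≤ x * x) : Idem x :=
  le_antisymm (mul_self_le x) h

namespace IsOrdinalSumOfWajsbergHoops

variable {I : Type*} [LinearOrder I] {H : I → Set A} {i j : I} {x y : A}

lemma exists_mem (hH : IsOrdinalSumOfWajsbergHoops H) (x : A) : ∃ i, x ∈ H i :=
  hH.1 x

lemma eq_one_of_mem_of_mem (hH : IsOrdinalSumOfWajsbergHoops H) (hij : i ≠ j)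
    (hx : x ∈ H i) (hx' : x ∈ H j) : x = 1 :=
  hH.2.1 i j hij ⟨hx, hx'⟩

lemma one_mem (hH : IsOrdinalSumOfWajsbergHoops H) (i : I) : (1 : A) ∈ H i :=
  hH.2.2.1 i

lemma mul_mem (hH : IsOrdinalSumOfWajsbergHoops H) (hx : x ∈ H i) (hy : y ∈ H i) :
    x * y ∈ H i :=
  (hH.2.2.2.1 i x hx y hy).1

lemma le_of_index_lt (hH : IsOrdinalSumOfWajsbergHoops H) (hij : i < j) (hx : x ∈ H i)
    (hx1 : x ≠ 1) (hy : y ∈ H j) : x ≤ y :=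
  le_of_himp_eq_one (hH.2.2.2.2.2.1 i j hij x hx hx1 y hy).1

lemma mul_eq_left_of_index_lt (hH : IsOrdinalSumOfWajsbergHoops H) (hij : i < j)
    (hx : x ∈ H i) (hx1 : x ≠ 1) (hy : y ∈ H j) : x * y = x :=
  (hH.2.2.2.2.2.1 i j hij x hx hx1 y hy).2

lemma exists_index_ne_of_not_mem (hH : IsOrdinalSumOfWajsbergHoops H) (hy : y ∉ H i) :
    ∃ j, j ≠ i ∧ y ∈ H j ∧ y ≠ 1 := by
  obtain ⟨j, hyj⟩ := hH.exists_mem y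
  exact ⟨j, fun h => hy (h ▸ hyj), hyj, fun h => hy (h ▸ hH.one_mem i)⟩

lemma index_lt_of_le (hH : IsOrdinalSumOfWajsbergHoops H) (hx : x ∈ H i) (hy : y ∈ H j)
    (hx1 : x ≠ 1) (hy1 : y ≠ 1) (hij : i ≠ j) (hxy : x ≤ y) : i < j := by
  refine hij.lt_or_gt.resolve_right fun hji => hx1 (hH.eq_one_of_mem_of_mem hij hx ?_)
  rwa [le_antisymm hxy (hH.le_of_index_lt hji hy hy1 hx)]

variable {X : Type*} {a : X → A}

lemma idem_of_isGLB_of_not_connected (hH : IsOrdinalSumOfWajsbergHoops H) {m : A}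
    (hm : IsGLB (Set.range a) m) (hm2 : IsGLB (Set.range fun x => a x * a x) (m * m))
    (hdisc : ¬∃ i, m ∈ H i ∧ ∃ x, a x ∈ H i) : Idem m := by
  obtain ⟨i, hmi⟩ := hH.exists_mem m
  rcases eq_or_ne m 1 with rfl | hm1
  · exact idem_one
  refine idem_of_le_mul_self (hm2.2 ?_)
  rintro _ ⟨x, rfl⟩
  obtain ⟨j, hji, haj, ha1⟩ := hH.exists_index_ne_of_not_mem fun h => hdisc ⟨i, hmi, x, h⟩
  have hij : i < j := hH.index_lt_of_le hmi haj hm1 ha1 hji.symm (hm.1 ⟨x, rfl⟩)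
  exact hH.le_of_index_lt hij hmi hm1 (hH.mul_mem haj haj)

lemma idem_of_isLUB_of_not_connected (hH : IsOrdinalSumOfWajsbergHoops H) {s : A}
    (hs : IsLUB (Set.range a) s) (hdisc : ¬∃ i, s ∈ H i ∧ ∃ x, a x ∈ H i) : Idem s := by
  obtain ⟨i, hsi⟩ := hH.exists_mem s
  rcases eq_or_ne s 1 with rfl | hs1
  · exact idem_one
  refine idem_of_le_mul_self (hs.2 ?_)
  rintro _ ⟨x, rfl⟩
  obtain ⟨j, hji, haj, ha1⟩ := hH.exists_index_ne_of_not_mem fun h => hdisc ⟨i, hsi, x, h⟩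
  have hax : a x ≤ s := hs.1 ⟨x, rfl⟩
  have hji' : j < i := hH.index_lt_of_le haj hsi ha1 hs1 hji hax
  calc a x = a x * s := (hH.mul_eq_left_of_index_lt hji' haj ha1 hsi).symm
    _ = s * a x := mul_comm _ _
    _ ≤ s * s := mul_le_mul_of_le _ _ hax s

end IsOrdinalSumOfWajsbergHoops

end BLChain

/-- let `A = ⊕_{i∈I} H i` be a BL-chain represented as an ordinal sum of
totally ordered Wajsberg hoops and `(a x)_{x ∈ X}` a family in `A`.
(1) If `inf_x (a x)` exists and `(inf_x a x)² = inf_x (a x)²`, then the family is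
∧-connected (some `H i` contains the infimum as well as some `a x`) or the infimum is
idempotent. (2) If `sup_x (a x)` exists, then the family is ∨-connected or the
supremum is idempotent. -/
theorem connected_or_idem_of_inf_sup (A : Type) [BLChain A]
    (I : Type) [LinearOrder I] (H : I → Set A)
    (hsum : BLChain.IsOrdinalSumOfWajsbergHoops H)
    (X : Type) (a : X → A) :
    (∀ m : A, IsGLB (Set.range a) m → IsGLB (Set.range fun x => a x * a x) (m * m) →
      (∃ i, m ∈ H i ∧ ∃ x, a x ∈ H i) ∨ BLChain.Idem m) ∧
    (∀ s : A, IsLUB (Set.range a) s →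
      (∃ i, s ∈ H i ∧ ∃ x, a x ∈ H i) ∨ BLChain.Idem s) :=
  ⟨fun _ hm hm2 => or_iff_not_imp_left.2 (hsum.idem_of_isGLB_of_not_connected hm hm2),
    fun _ hs => or_iff_not_imp_left.2 (hsum.idem_of_isLUB_of_not_connected hs)⟩
end

section
/- Each BL-chain A can be isomorphically embedded into a saturated BL-chain Ā such that: (1) every element of Ā not in the image of A is idempotent; and (2) if C ⊆ A is such that the infimum ⋀^A C exists in A and is idempotent, then ⋀^Ā C exists in Ā and equals ⋀^A C, and the analogous statement holds for suprema. -/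
namespace BLChain

/-- A cut `(X, Y)` in a BL-chain: `X ∪ Y = A`, every element of `X` is `≤` every
element of `Y`, `Y` is closed under `·`, and `x·y = x` for `x ∈ X`, `y ∈ Y`. -/
def IsCut {A : Type*} [BLChain A] (X Y : Set A) : Prop :=
  X ∪ Y = Set.univ ∧ (∀ x ∈ X, ∀ y ∈ Y, x ≤ y) ∧
    (∀ y ∈ Y, ∀ y' ∈ Y, y * y' ∈ Y) ∧ ∀ x ∈ X, ∀ y ∈ Y, x * y = x

/-- A BL-chain is saturated if every cut `(X, Y)` is saturated, i.e. there is an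
idempotent `u` with `x ≤ u ≤ y` for all `x ∈ X`, `y ∈ Y`. -/
def IsSaturated (A : Type*) [BLChain A] : Prop :=
  ∀ X Y : Set A, IsCut X Y →
    ∃ u : A, Idem u ∧ (∀ x ∈ X, x ≤ u) ∧ ∀ y ∈ Y, u ≤ y

/-- An embedding of BL-chains: an injective map preserving `≤`, `·`, `→`, `0` and `1`. -/
def IsEmbedding {A B : Type*} [BLChain A] [BLChain B] (f : A → B) : Prop :=
  Function.Injective f ∧ (∀ x y : A, x ≤ y → f x ≤ f y) ∧
    (∀ x y : A, f (x * y) = f x * f y) ∧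
    (∀ x y : A, f (himp x y) = himp (f x) (f y)) ∧
    f bot = bot ∧ f 1 = 1

end BLChain

namespace BLSat

open BLChain

variable {A : Type} [BLChain A]

lemma mul_le_left (a b : A) : a * b ≤ a := by
  have h := BLChain.mul_le_mul_of_le b 1 (BLChain.le_one b) a
  simpa using h

lemma himp_eq_one {a b : A} (h : a ≤ b) : BLChain.himp a b = 1 := by
  have h1 : (1 : A) * a ≤ b := by simpa using h
  have h2 := (BLChain.mul_le_iff_le_himp (1 : A) a b).1 h1
  exact le_antisymm (BLChain.le_one _) h2

lemma idem_one : Idem (1 : A) := mul_one 1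

lemma idem_bot : Idem (BLChain.bot : A) := by
  refine le_antisymm ?_ (BLChain.bot_le _)
  simpa using mul_le_left (BLChain.bot : A) (BLChain.bot : A)

/-- An unsaturated (proper) cut, recorded by its lower set. -/
def Unsat (S : Set A) : Prop :=
  IsCut S Sᶜ ∧ ¬ ∃ u : A, Idem u ∧ (∀ x ∈ S, x ≤ u) ∧ ∀ y ∈ Sᶜ, u ≤ y

namespace Unsat

variable {S T : Set A}

lemma le_across (hS : Unsat S) {a b : A} (ha : a ∈ S) (hb : b ∉ S) : a ≤ b :=
  hS.1.2.1 a ha b hb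

lemma mul_notMem (hS : Unsat S) {a b : A} (ha : a ∉ S) (hb : b ∉ S) : a * b ∉ S :=
  hS.1.2.2.1 a ha b hb

lemma mul_across (hS : Unsat S) {a b : A} (ha : a ∈ S) (hb : b ∉ S) : a * b = a :=
  hS.1.2.2.2 a ha b hb

lemma mem_of_le (hS : Unsat S) {a b : A} (ha : a ∈ S) (hb : b ≤ a) : b ∈ S := by
  by_contra hbS
  have h1 := hS.le_across ha hbS
  exact hbS (le_antisymm h1 hb ▸ ha)

lemma one_notMem (hS : Unsat S) : (1 : A) ∉ S := by
  intro h1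
  exact hS.2 ⟨1, idem_one, fun x _ => BLChain.le_one x, fun y hy => hS.le_across h1 hy⟩

lemma bot_mem (hS : Unsat S) : (BLChain.bot : A) ∈ S := by
  by_contra hb
  exact hS.2 ⟨BLChain.bot, idem_bot, fun x hx => hS.le_across hx hb,
    fun y _ => BLChain.bot_le y⟩

lemma subset_or (hS : Unsat S) (hT : Unsat T) : S ⊆ T ∨ T ⊆ S := by
  by_contra h
  push_neg at h
  obtain ⟨h1, h2⟩ := h
  rw [Set.not_subset] at h1 h2
  obtain ⟨a, haS, haT⟩ := h1
  obtain ⟨b, hbT, hbS⟩ := h2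
  have hab := hS.le_across haS hbS
  have hba := hT.le_across hbT haT
  exact haT (le_antisymm hab hba ▸ hbT)

end Unsat

/-- The index type of new idempotent elements. -/
def DSet (A : Type) [BLChain A] : Type := {S : Set A // Unsat S}

/-- The saturated extension. -/
inductive Bar (A : Type) [BLChain A] : Type
  | old : A → Bar A
  | new : DSet A → Bar A

namespace Bar

def le' : Bar A → Bar A → Prop
  | old a, old b => a ≤ b
  | old a, new S => a ∈ S.1
  | new S, old a => a ∉ S.1
  | new S, new T => S.1 ⊆ T.1

noncomputable instance : LinearOrder (Bar A) where
  le := le'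
  le_refl x := by cases x with
    | old a => exact le_refl a
    | new S => exact fun x hx => hx
  le_trans x y z hxy hyz := by
    cases x with
    | old a => cases y with
      | old b => cases z with
        | old c => exact le_trans (α := A) hxy hyz
        | new S => exact S.2.mem_of_le hyz hxy
      | new S => cases z with
        | old c => exact le_trans (α := A) (S.2.le_across hxy hyz) (le_refl c)
        | new T => exact hyz hxy
    | new S => cases y with
      | old b => cases z with
        | old c => exact fun hc => hxy (S.2.mem_of_le hc hyz)
        | new T => exact fun s hs => T.2.mem_of_le hyz (S.2.le_across hs hxy)
      | new T => cases z with
        | old c => exact fun hc => hyz (hxy hc)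
        | new U => exact fun s hs => hyz (hxy hs)
  le_antisymm x y hxy hyx := by
    cases x with
    | old a => cases y with
      | old b => exact congrArg old (le_antisymm (α := A) hxy hyx)
      | new S => exact absurd hxy hyx
    | new S => cases y with
      | old b => exact absurd hyx hxy
      | new T => exact congrArg new (Subtype.ext (subset_antisymm hxy hyx))
  le_total x y := by
    cases x with
    | old a => cases y with
      | old b => exact le_total (α := A) a b
      | new S => exact (Classical.em (a ∈ S.1)).imp id id
    | new S => cases y with
      | old b => exact ((Classical.em (b ∈ S.1)).symm.imp id id)
      | new T => exact S.2.subset_or T.2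
  toDecidableLE := Classical.decRel _

@[simp] lemma old_le_old {a b : A} : (old a : Bar A) ≤ old b ↔ a ≤ b := Iff.rfl
@[simp] lemma old_le_new {a : A} {S : DSet A} : (old a : Bar A) ≤ new S ↔ a ∈ S.1 := Iff.rfl
@[simp] lemma new_le_old {a : A} {S : DSet A} : (new S : Bar A) ≤ old a ↔ a ∉ S.1 := Iff.rfl
@[simp] lemma new_le_new {S T : DSet A} : (new S : Bar A) ≤ new T ↔ S.1 ⊆ T.1 := Iff.rfl

end Bar

end BLSat

namespace BLSat
namespace Bar

open BLChain

variable {A : Type} [BLChain A]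

lemma mul_le_right (a b : A) : a * b ≤ b := by
  have := mul_le_left b a
  rwa [mul_comm] at this

open Classical in
noncomputable def mul' : Bar A → Bar A → Bar A
  | old a, old b => old (a * b)
  | old a, new S => if a ∈ S.1 then old a else new S
  | new S, old a => if a ∈ S.1 then old a else new S
  | new S, new T => if S.1 ⊆ T.1 then new S else new T

open Classical in
@[simp] lemma old_mul_old {a b : A} : mul' (old a) (old b) = old (a * b) := rfl
open Classical in
lemma old_mul_new {a : A} {S : DSet A} :
    mul' (old a) (new S) = if a ∈ S.1 then old a else new S := rfl
open Classical in
lemma new_mul_old {a : A} {S : DSet A} :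
    mul' (new S) (old a) = if a ∈ S.1 then old a else new S := rfl
open Classical in
lemma new_mul_new {S T : DSet A} :
    mul' (new S) (new T) = if S.1 ⊆ T.1 then new S else new T := rfl

lemma mul'_comm (x y : Bar A) : mul' x y = mul' y x := by
  rcases x with a | S <;> rcases y with b | T
  · simp [mul_comm]
  · rw [old_mul_new, new_mul_old]
  · rw [old_mul_new, new_mul_old]
  · rw [new_mul_new, new_mul_new]
    rcases S.2.subset_or T.2 with h | h
    · by_cases h' : T.1 ⊆ S.1
      · simp [h, h', new.injEq, Subtype.ext (subset_antisymm h h')]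
      · simp [h, h']
    · by_cases h' : S.1 ⊆ T.1
      · simp [h, h', new.injEq, Subtype.ext (subset_antisymm h' h)]
      · simp [h, h']

lemma one_mul' (x : Bar A) : mul' (old 1) x = x := by
  rcases x with a | S
  · simp
  · rw [old_mul_new, if_neg S.2.one_notMem]

lemma mul'_assoc (x y z : Bar A) : mul' (mul' x y) z = mul' x (mul' y z) := by
  rcases x with a | S <;> rcases y with b | T <;> rcases z with c | U
  · simp [mul_assoc]
  · -- o o n
    rw [old_mul_old, old_mul_new, old_mul_new]
    by_cases hb : b ∈ U.1
    · rw [if_pos (U.2.mem_of_le hb (mul_le_right a b)), if_pos hb, old_mul_old]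
    · rw [if_neg hb]
      by_cases ha : a ∈ U.1
      · rw [if_pos (by rwa [U.2.mul_across ha hb]), old_mul_new, if_pos ha,
          U.2.mul_across ha hb]
      · rw [if_neg (U.2.mul_notMem ha hb), old_mul_new, if_neg ha]
  · -- o n o
    rw [old_mul_new, new_mul_old]
    by_cases ha : a ∈ T.1
    · rw [if_pos ha]
      by_cases hc : c ∈ T.1
      · rw [if_pos hc]
      · rw [if_neg hc, old_mul_old, old_mul_new, if_pos ha, T.2.mul_across ha hc]
    · rw [if_neg ha]
      by_cases hc : c ∈ T.1
      · rw [if_pos hc, new_mul_old, if_pos hc, old_mul_old,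
          show a * c = c from by rw [mul_comm]; exact T.2.mul_across hc ha]
      · rw [if_neg hc, new_mul_old, if_neg hc, old_mul_new, if_neg ha]
  · -- o n n
    rw [old_mul_new, new_mul_new]
    by_cases hTU : T.1 ⊆ U.1
    · rw [if_pos hTU, old_mul_new]
      by_cases ha : a ∈ T.1
      · rw [if_pos ha, old_mul_new, if_pos (hTU ha)]
      · rw [if_neg ha, new_mul_new, if_pos hTU]
    · rw [if_neg hTU, old_mul_new]
      have hUT : U.1 ⊆ T.1 := (T.2.subset_or U.2).resolve_left hTU
      by_cases ha : a ∈ T.1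
      · rw [if_pos ha, old_mul_new]
      · rw [if_neg ha, new_mul_new, if_neg hTU, if_neg (fun h => ha (hUT h))]
  · -- n o o
    rw [new_mul_old, old_mul_old, new_mul_old]
    by_cases hb : b ∈ S.1
    · rw [if_pos hb, if_pos (S.2.mem_of_le hb (mul_le_left b c)), old_mul_old]
    · rw [if_neg hb]
      by_cases hc : c ∈ S.1
      · rw [if_pos (by rw [mul_comm, S.2.mul_across hc hb]; exact hc), new_mul_old,
          if_pos hc, show b * c = c from by rw [mul_comm]; exact S.2.mul_across hc hb]
      · rw [if_neg (S.2.mul_notMem hb hc), new_mul_old, if_neg hc]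
  · -- n o n
    by_cases hb : b ∈ S.1 <;> by_cases hbU : b ∈ U.1
    · simp only [new_mul_old, old_mul_new, hb, hbU, if_true]
    · have h4 : ¬ S.1 ⊆ U.1 := fun h => hbU (h hb)
      simp only [new_mul_old, old_mul_new, new_mul_new, hb, hbU, h4, if_true, if_false]
    · have hSU : S.1 ⊆ U.1 := by
        rcases S.2.subset_or U.2 with h | h
        · exact h
        · exact absurd (h hbU) hb
      simp only [new_mul_old, old_mul_new, new_mul_new, hb, hbU, hSU, if_true, if_false]
    · simp only [new_mul_old, old_mul_new, new_mul_new, hb, hbU, if_false]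
  · -- n n o
    rw [new_mul_new, new_mul_old]
    by_cases hST : S.1 ⊆ T.1
    · rw [if_pos hST]
      by_cases hc : c ∈ T.1
      · rw [if_pos hc, new_mul_old]
      · rw [if_neg hc, new_mul_old, if_neg (fun h => hc (hST h)),
          new_mul_new, if_pos hST]
    · rw [if_neg hST]
      have hTS : T.1 ⊆ S.1 := (S.2.subset_or T.2).resolve_left hST
      by_cases hc : c ∈ T.1
      · rw [if_pos hc, new_mul_old, if_pos hc, new_mul_old, if_pos (hTS hc)]
      · rw [if_neg hc, new_mul_old, if_neg hc, new_mul_new, if_neg hST]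
  · -- n n n
    by_cases h1 : S.1 ⊆ T.1 <;> by_cases h2 : T.1 ⊆ U.1 <;> by_cases h3 : S.1 ⊆ U.1 <;>
      simp only [new_mul_new, h1, h2, h3, if_true, if_false]
    · exact absurd (h1.trans h2) h3
    · have hTS : T.1 ⊆ S.1 := (S.2.subset_or T.2).resolve_left h1
      have hUT : U.1 ⊆ T.1 := (T.2.subset_or U.2).resolve_left h2
      exact congrArg new (Subtype.ext (subset_antisymm (hUT.trans hTS) h3))

noncomputable instance : CommMonoid (Bar A) where
  mul := mul'
  one := old 1
  mul_assoc := mul'_assoc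
  one_mul := one_mul'
  mul_one x := by
    show mul' x (old 1) = x
    rw [mul'_comm]; exact one_mul' x
  mul_comm := mul'_comm

lemma mul_def (x y : Bar A) : x * y = mul' x y := rfl

@[simp] lemma one_def : (1 : Bar A) = old 1 := rfl

open Classical in
noncomputable def himp' : Bar A → Bar A → Bar A
  | old a, old b => old (BLChain.himp a b)
  | old a, new S => if a ∈ S.1 then old 1 else new S
  | new S, old a => if a ∈ S.1 then old a else old 1
  | new S, new T => if S.1 ⊆ T.1 then old 1 else new T

open Classical in
@[simp] lemma himp_old_old {a b : A} :
    himp' (old a) (old b) = old (BLChain.himp a b) := rfl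
open Classical in
lemma himp_old_new {a : A} {S : DSet A} :
    himp' (old a) (new S) = if a ∈ S.1 then old 1 else new S := rfl
open Classical in
lemma himp_new_old {a : A} {S : DSet A} :
    himp' (new S) (old a) = if a ∈ S.1 then old a else old 1 := rfl
open Classical in
lemma himp_new_new {S T : DSet A} :
    himp' (new S) (new T) = if S.1 ⊆ T.1 then old 1 else new T := rfl

lemma resid (x y z : Bar A) : mul' x y ≤ z ↔ x ≤ himp' y z := by
  rcases x with a | S <;> rcases y with b | T <;> rcases z with c | U
  · exact BLChain.mul_le_iff_le_himp a b c
  · -- o o n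
    rw [old_mul_old, himp_old_new]
    by_cases hb : b ∈ U.1
    · rw [if_pos hb]
      simp only [old_le_new, old_le_old]
      exact ⟨fun _ => BLChain.le_one a, fun _ => U.2.mem_of_le hb (mul_le_right a b)⟩
    · rw [if_neg hb]
      simp only [old_le_new]
      constructor
      · intro h
        by_contra ha
        exact U.2.mul_notMem ha hb h
      · intro ha
        rw [U.2.mul_across ha hb]; exact ha
  · -- o n o
    rw [old_mul_new, himp_new_old]
    by_cases hc : c ∈ T.1
    · rw [if_pos hc]
      by_cases ha : a ∈ T.1
      · rw [if_pos ha]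
      · rw [if_neg ha]
        simp only [new_le_old, old_le_old]
        constructor
        · exact fun h => absurd hc h
        · intro h
          exact absurd (le_antisymm (T.2.le_across hc ha) h ▸ hc) ha
    · rw [if_neg hc]
      by_cases ha : a ∈ T.1
      · rw [if_pos ha]
        simp only [old_le_old]
        exact ⟨fun _ => BLChain.le_one a, fun _ => T.2.le_across ha hc⟩
      · rw [if_neg ha]
        simp only [new_le_old, old_le_old]
        exact ⟨fun _ => BLChain.le_one a, fun _ => hc⟩
  · -- o n n
    rw [old_mul_new, himp_new_new]
    by_cases hTU : T.1 ⊆ U.1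
    · rw [if_pos hTU]
      by_cases ha : a ∈ T.1
      · rw [if_pos ha]
        simp only [old_le_new, old_le_old]
        exact ⟨fun _ => BLChain.le_one a, fun _ => hTU ha⟩
      · rw [if_neg ha]
        simp only [new_le_new, old_le_old]
        exact ⟨fun _ => BLChain.le_one a, fun _ => hTU⟩
    · rw [if_neg hTU]
      have hUT : U.1 ⊆ T.1 := (T.2.subset_or U.2).resolve_left hTU
      by_cases ha : a ∈ T.1
      · rw [if_pos ha]
      · rw [if_neg ha]
        simp only [new_le_new, old_le_new]
        exact ⟨fun h => absurd h hTU, fun h => absurd (hUT h) ha⟩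
  · -- n o o
    rw [new_mul_old, himp_old_old]
    by_cases hb : b ∈ S.1
    · rw [if_pos hb]
      simp only [old_le_old, new_le_old]
      constructor
      · intro h hm
        exact S.2.one_notMem (himp_eq_one h ▸ hm)
      · intro h
        have h2 := S.2.mul_across hb h
        have h3 := BLChain.div b c
        rw [h2] at h3
        exact min_eq_left_iff.mp h3.symm
    · rw [if_neg hb]
      simp only [new_le_old]
      constructor
      · intro hc hm
        have h1 : c * b ≤ c := mul_le_left c b
        have h2 : c ≤ BLChain.himp b c := (BLChain.mul_le_iff_le_himp c b c).1 h1
        exact hc (S.2.mem_of_le hm h2)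
      · intro hm hc
        have h1 : b * BLChain.himp b c ∉ S.1 := S.2.mul_notMem hb hm
        rw [BLChain.div] at h1
        exact h1 (S.2.mem_of_le hc (min_le_right b c))
  · -- n o n
    rw [new_mul_old, himp_old_new]
    by_cases hbU : b ∈ U.1
    · rw [if_pos hbU]
      by_cases hb : b ∈ S.1
      · rw [if_pos hb]
        simp only [old_le_new, new_le_old]
        exact ⟨fun _ => S.2.one_notMem, fun _ => hbU⟩
      · rw [if_neg hb]
        simp only [new_le_new, new_le_old]
        exact ⟨fun _ => S.2.one_notMem,
          fun _ s hs => U.2.mem_of_le hbU (S.2.le_across hs hb)⟩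
    · rw [if_neg hbU]
      by_cases hb : b ∈ S.1
      · rw [if_pos hb]
        simp only [old_le_new, new_le_new]
        exact ⟨fun h => absurd h hbU, fun h => absurd (h hb) hbU⟩
      · rw [if_neg hb]
  · -- n n o
    rw [new_mul_new, himp_new_old]
    by_cases hcT : c ∈ T.1
    · rw [if_pos hcT]
      by_cases hST : S.1 ⊆ T.1
      · rw [if_pos hST]
      · rw [if_neg hST]
        have hTS : T.1 ⊆ S.1 := (S.2.subset_or T.2).resolve_left hST
        simp only [new_le_old]
        exact ⟨fun h => absurd hcT h, fun h => absurd (hTS hcT) h⟩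
    · rw [if_neg hcT]
      by_cases hST : S.1 ⊆ T.1
      · rw [if_pos hST]
        simp only [new_le_old]
        exact ⟨fun _ => S.2.one_notMem, fun _ h => hcT (hST h)⟩
      · rw [if_neg hST]
        simp only [new_le_old]
        exact ⟨fun _ => S.2.one_notMem, fun _ => hcT⟩
  · -- n n n
    rw [new_mul_new, himp_new_new]
    by_cases hTU : T.1 ⊆ U.1
    · rw [if_pos hTU]
      by_cases hST : S.1 ⊆ T.1
      · rw [if_pos hST]
        simp only [new_le_new, new_le_old]
        exact ⟨fun _ => S.2.one_notMem, fun _ => hST.trans hTU⟩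
      · rw [if_neg hST]
        simp only [new_le_new, new_le_old]
        exact ⟨fun _ => S.2.one_notMem, fun _ => hTU⟩
    · rw [if_neg hTU]
      have hUT : U.1 ⊆ T.1 := (T.2.subset_or U.2).resolve_left hTU
      by_cases hST : S.1 ⊆ T.1
      · rw [if_pos hST]
      · rw [if_neg hST]
        have hTS : T.1 ⊆ S.1 := (S.2.subset_or T.2).resolve_left hST
        simp only [new_le_new]
        exact ⟨fun h => absurd h hTU, fun h => absurd (hTS.trans h) hTU⟩

noncomputable instance : BLChain (Bar A) where
  bot := old BLChain.bot
  bot_le x := by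
    rcases x with a | S
    · exact BLChain.bot_le a
    · exact S.2.bot_mem
  le_one x := by
    rcases x with a | S
    · exact BLChain.le_one a
    · exact S.2.one_notMem
  mul_le_mul_of_le x y h z := by
    have h2 : y ≤ himp' z (mul' z y) :=
      (resid y z (mul' z y)).1 (le_of_eq (mul'_comm y z))
    have h4 := (resid x z (mul' z y)).2 (le_trans h h2)
    rw [mul_def, mul_def, mul'_comm z x]
    exact h4
  himp := himp'
  mul_le_iff_le_himp := resid
  div x y := by
    rcases x with a | S <;> rcases y with b | T
    · show old (a * BLChain.himp a b) = min (old a) (old b)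
      rw [BLChain.div]
      rcases le_total a b with h | h
      · rw [min_eq_left h, min_eq_left (old_le_old.mpr h)]
      · rw [min_eq_right h, min_eq_right (old_le_old.mpr h)]
    · show mul' (old a) (himp' (old a) (new T)) = min (old a) (new T)
      rw [himp_old_new]
      by_cases ha : a ∈ T.1
      · rw [if_pos ha, old_mul_old, mul_one, min_eq_left (old_le_new.mpr ha)]
      · rw [if_neg ha, old_mul_new, if_neg ha, min_eq_right (new_le_old.mpr ha)]
    · show mul' (new S) (himp' (new S) (old b)) = min (new S) (old b)
      rw [himp_new_old]
      by_cases hb : b ∈ S.1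
      · rw [if_pos hb, new_mul_old, if_pos hb, min_eq_right (old_le_new.mpr hb)]
      · rw [if_neg hb, new_mul_old, if_neg S.2.one_notMem,
          min_eq_left (new_le_old.mpr hb)]
    · show mul' (new S) (himp' (new S) (new T)) = min (new S) (new T)
      rw [himp_new_new]
      by_cases hST : S.1 ⊆ T.1
      · rw [if_pos hST, new_mul_old, if_neg S.2.one_notMem,
          min_eq_left (new_le_new.mpr hST)]
      · have hTS : T.1 ⊆ S.1 := (S.2.subset_or T.2).resolve_left hST
        rw [if_neg hST, new_mul_new, if_neg hST, min_eq_right (new_le_new.mpr hTS)]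

lemma himp_def (x y : Bar A) : BLChain.himp x y = himp' x y := rfl

end Bar
end BLSat

namespace BLSat
namespace Bar

open BLChain

variable {A : Type} [BLChain A]

lemma old_injective : Function.Injective (old : A → Bar A) := by
  intro a b h
  injection h

lemma idem_old {a : A} (h : Idem a) : Idem (old a : Bar A) := by
  show mul' (old a) (old a) = old a
  rw [old_mul_old, h]

lemma idem_new (S : DSet A) : Idem (new S : Bar A) := by
  show mul' (new S) (new S) = new S
  rw [new_mul_new, if_pos subset_rfl]

lemma saturated : IsSaturated (Bar A) := by
  rintro X' Y' ⟨hunion, hle, hclosed, hmulxy⟩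
  by_cases hint : (X' ∩ Y').Nonempty
  · obtain ⟨w, hwX, hwY⟩ := hint
    exact ⟨w, hmulxy w hwX w hwY, fun x hx => hle x hx w hwY, fun y hy => hle w hwX y hy⟩
  have hdisj : ∀ z, z ∈ X' → z ∈ Y' → False := fun z h1 h2 => hint ⟨z, h1, h2⟩
  set X : Set A := {a | old a ∈ X'} with hX
  have hmemY : ∀ a : A, a ∉ X → old a ∈ Y' := by
    intro a ha
    rcases Set.eq_univ_iff_forall.mp hunion (old a) with h | h
    · exact absurd h ha
    · exact h
  have hnotX : ∀ a : A, old a ∈ Y' → a ∉ X := fun a h1 h2 => hdisj (old a) h2 h1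
  have hcut : IsCut X Xᶜ := by
    refine ⟨Set.union_compl_self X, ?_, ?_, ?_⟩
    · intro x hx y hy
      exact old_le_old.mp (hle (old x) hx (old y) (hmemY y hy))
    · intro y hy y' hy'
      intro hmem
      exact hdisj (old (y * y')) hmem
        (hclosed (old y) (hmemY y hy) (old y') (hmemY y' hy'))
    · intro x hx y hy
      exact old_injective (hmulxy (old x) hx (old y) (hmemY y hy))
  by_cases hsat : ∃ u : A, Idem u ∧ (∀ x ∈ X, x ≤ u) ∧ ∀ y ∈ Xᶜ, u ≤ y
  · obtain ⟨u, hu1, hu2, hu3⟩ := hsat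
    refine ⟨old u, idem_old hu1, ?_, ?_⟩
    · intro x' hx'
      rcases x' with a | S
      · exact old_le_old.mpr (hu2 a hx')
      · show u ∉ S.1
        intro huS
        refine S.2.2 ⟨u, hu1, ?_, fun y hy => S.2.le_across huS hy⟩
        intro s hs
        by_cases hsX : s ∈ X
        · exact hu2 s hsX
        · exact absurd (new_le_old.mp (hle (new S) hx' (old s) (hmemY s hsX))) (fun h => h hs)
    · intro y' hy'
      rcases y' with b | S
      · exact old_le_old.mpr (hu3 b (hnotX b hy'))
      · show u ∈ S.1
        by_contra huS
        refine S.2.2 ⟨u, hu1, fun s hs => S.2.le_across hs huS, ?_⟩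
        intro y hy
        by_cases hyX : y ∈ X
        · exact absurd (old_le_new.mp (hle (old y) hyX (new S) hy')) hy
        · exact hu3 y hyX
  · set S0 : DSet A := ⟨X, hcut, hsat⟩ with hS0
    refine ⟨new S0, idem_new S0, ?_, ?_⟩
    · intro x' hx'
      rcases x' with a | S
      · exact old_le_new.mpr hx'
      · show S.1 ⊆ X
        intro s hs
        by_contra hsX
        exact (new_le_old.mp (hle (new S) hx' (old s) (hmemY s hsX))) hs
    · intro y' hy'
      rcases y' with b | S
      · exact new_le_old.mpr (hnotX b hy')
      · show X ⊆ S.1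
        intro x hx
        exact old_le_new.mp (hle (old x) hx (new S) hy')

lemma embedding : IsEmbedding (old : A → Bar A) := by
  refine ⟨old_injective, fun x y h => old_le_old.mpr h, fun x y => rfl, fun x y => rfl,
    rfl, rfl⟩

lemma glb (C : Set A) (m : A) (hglb : IsGLB C m) (hm : Idem m) :
    IsGLB (old '' C) (old m : Bar A) := by
  constructor
  · rintro z ⟨c, hc, rfl⟩
    exact old_le_old.mpr (hglb.1 hc)
  · rintro b hb
    rcases b with a | S
    · refine old_le_old.mpr (hglb.2 ?_)
      intro c hc
      exact old_le_old.mp (hb ⟨c, hc, rfl⟩)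
    · show m ∉ S.1
      intro hmS
      refine S.2.2 ⟨m, hm, ?_, fun y hy => S.2.le_across hmS hy⟩
      intro s hs
      refine hglb.2 ?_
      intro c hc
      exact S.2.le_across hs (new_le_old.mp (hb ⟨c, hc, rfl⟩))

lemma lub (C : Set A) (m : A) (hlub : IsLUB C m) (hm : Idem m) :
    IsLUB (old '' C) (old m : Bar A) := by
  constructor
  · rintro z ⟨c, hc, rfl⟩
    exact old_le_old.mpr (hlub.1 hc)
  · rintro b hb
    rcases b with a | S
    · refine old_le_old.mpr (hlub.2 ?_)
      intro c hc
      exact old_le_old.mp (hb ⟨c, hc, rfl⟩)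
    · show m ∈ S.1
      by_contra hmS
      refine S.2.2 ⟨m, hm, fun s hs => S.2.le_across hs hmS, ?_⟩
      intro y hy
      refine hlub.2 ?_
      intro c hc
      exact S.2.le_across (old_le_new.mp (hb ⟨c, hc, rfl⟩)) hy

end Bar
end BLSat

/-- each BL-chain `A` embeds isomorphically into a saturated BL-chain `Ā`
such that (1) every element of `Ā` not in the image of `A` is idempotent, and (2) if
`C ⊆ A` has an infimum in `A` which is idempotent, then `C` (i.e. its image) has an
infimum in `Ā` equal to it; analogously for suprema. -/
theorem embed_into_saturated (A : Type) [BLChain A] :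
    ∃ (Abar : Type) (_ : BLChain Abar) (f : A → Abar),
      BLChain.IsEmbedding f ∧ BLChain.IsSaturated Abar ∧
      (∀ y : Abar, y ∉ Set.range f → BLChain.Idem y) ∧
      (∀ C : Set A, ∀ m : A, IsGLB C m → BLChain.Idem m → IsGLB (f '' C) (f m)) ∧
      (∀ C : Set A, ∀ m : A, IsLUB C m → BLChain.Idem m → IsLUB (f '' C) (f m)) := by
  refine ⟨BLSat.Bar A, inferInstance, BLSat.Bar.old, BLSat.Bar.embedding,
    BLSat.Bar.saturated, ?_, BLSat.Bar.glb, BLSat.Bar.lub⟩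
  intro y hy
  rcases y with a | S
  · exact absurd ⟨a, rfl⟩ hy
  · exact BLSat.Bar.idem_new S
end
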